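/- arXiv:2407.08300 — 2 statements merged into one kernel-verified Lean document; each statement's English description precedes it below -/
import Mathlib

section
/- The dual cone of Γ₂⁺ equals the set {λ ∈ closure(Γₙ⁺) : |λ|² ≤ (σ₁(λ))²/(n−1)}, where the dual cone is (Γ₂⁺)* = {λ ∈ ℝⁿ : λ·μ ≥ 0 for all μ ∈ Γ₂⁺}. -/
/-!
Since `2 σ₂(μ) = σ₁(μ)² - |μ|²`, the cone Γ₂⁺ is the round cone `|μ|² < σ₁(μ)²` about the
diagonal. The identity `n λ·μ - σ₁(λ) σ₁(μ) = ½ Σᵢⱼ (λᵢ - λⱼ)(μᵢ - μⱼ)` and Cauchy–Schwarz bound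
`λ·μ` below by `0` as soon as `σ₁(λ) ≥ 0` and `(n - 1)|λ|² ≤ σ₁(λ)²`. Conversely, testing against
the diagonal vector and a suitable tilt of it in the direction of the centred part of `λ` shows
that every element of the dual cone satisfies these two conditions, and they force `λᵢ ≥ 0` by
Cauchy–Schwarz on the other `n - 1` coordinates.
-/

open Finset

/-- σ₂ as the sum over pairs i < j. -/
noncomputable def sigma2 {n : ℕ} (l : Fin n → ℝ) : ℝ :=
  ∑ i, ∑ j ∈ Finset.univ.filter (fun j => i < j), l i * l j

/-- The cone Γ₂⁺ = {λ : σ₁(λ) > 0, σ₂(λ) > 0}. -/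
noncomputable def Gamma2 (n : ℕ) : Set (Fin n → ℝ) :=
  {l | 0 < ∑ i, l i ∧ 0 < sigma2 l}

theorem two_mul_sigma2 {n : ℕ} (l : Fin n → ℝ) :
    2 * sigma2 l = (∑ i, l i) ^ 2 - ∑ i, l i ^ 2 := by
  have hsq : (∑ i, l i) ^ 2 = ∑ i, ∑ j, l i * l j := by rw [sq, sum_mul_sum]
  have hsplit (i : Fin n) : ∑ j, l i * l j = ∑ j ∈ univ.filter (i < ·), l i * l j
      + ∑ j ∈ univ.filter (· < i), l i * l j + l i ^ 2 := by
    rw [← sum_filter_add_sum_filter_not univ (i < ·), add_assoc]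
    congr 1
    have : univ.filter (fun j => ¬ i < j) = insert i (univ.filter (· < i)) := by
      ext j
      simp [le_iff_lt_or_eq, or_comm, eq_comm]
    rw [this, sum_insert (by simp), sq]
    ring
  have hswap : ∑ i, ∑ j ∈ univ.filter (· < i), l i * l j = sigma2 l := by
    rw [sigma2, sum_comm' (t' := univ) (s' := fun j => univ.filter (j < ·)) (by simp)]
    exact sum_congr rfl fun j _ => sum_congr rfl fun i _ => mul_comm _ _
  rw [hsq, sum_congr rfl fun i _ => hsplit i, sum_add_distrib, sum_add_distrib, hswap, sigma2]
  ring

theorem mem_Gamma2_iff {n : ℕ} {μ : Fin n → ℝ} :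
    μ ∈ Gamma2 n ↔ 0 < ∑ i, μ i ∧ ∑ i, μ i ^ 2 < (∑ i, μ i) ^ 2 := by
  refine and_congr_right fun _ => ?_
  rw [← mul_pos_iff_of_pos_left two_pos, two_mul_sigma2, sub_pos]

theorem exists_gt_sq_lt {p q : ℝ} (h : p ^ 2 < q) : ∃ r, p < r ∧ r ^ 2 < q := by
  obtain ⟨r, hpr, hrq⟩ := exists_between (Real.lt_sqrt_of_sq_lt h)
  refine ⟨r, hpr, ?_⟩
  have := sq_lt_sq' ((Real.neg_sqrt_lt_of_sq_lt h).trans hpr) hrq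
  rwa [Real.sq_sqrt ((sq_nonneg p).trans h.le)] at this

section CauchySchwarz

variable {ι : Type*} [Fintype ι]

theorem sum_sum_sub_mul_sub (f g : ι → ℝ) :
    ∑ i, ∑ j, (f i - f j) * (g i - g j)
      = 2 * (Fintype.card ι * ∑ i, f i * g i - (∑ i, f i) * ∑ i, g i) := by
  simp only [sub_mul, mul_sub, sum_sub_distrib, ← mul_sum, ← sum_mul, sum_const, card_univ,
    nsmul_eq_mul]
  simp only [mul_left_comm (f _), ← mul_sum]
  ring

theorem sq_card_mul_sum_mul_sub_le (f g : ι → ℝ) :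
    (Fintype.card ι * ∑ i, f i * g i - (∑ i, f i) * ∑ i, g i) ^ 2
      ≤ (Fintype.card ι * ∑ i, f i ^ 2 - (∑ i, f i) ^ 2)
        * (Fintype.card ι * ∑ i, g i ^ 2 - (∑ i, g i) ^ 2) := by
  have h := sum_mul_sq_le_sq_mul_sq (univ ×ˢ univ)
    (fun p : ι × ι => f p.1 - f p.2) (fun p => g p.1 - g p.2)
  simp only [sum_product, sq (_ - _)] at h
  rw [sum_sum_sub_mul_sub, sum_sum_sub_mul_sub, sum_sum_sub_mul_sub] at h
  simp only [← sq] at h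
  nlinarith

theorem nonneg_of_card_sub_one_mul_sum_sq_le {f : ι → ℝ} (hS : 0 ≤ ∑ i, f i)
    (h : (Fintype.card ι - 1) * ∑ i, f i ^ 2 ≤ (∑ i, f i) ^ 2) (i : ι) : 0 ≤ f i := by
  classical
  have hrest := sq_sum_le_card_mul_sum_sq (s := univ.erase i) (f := f)
  rw [card_erase_of_mem (mem_univ i), card_univ, Nat.cast_sub (Fintype.card_pos_iff.2 ⟨i⟩),
    Nat.cast_one] at hrest
  have hcard : (1 : ℝ) ≤ Fintype.card ι := by exact_mod_cast Fintype.card_pos_iff.2 ⟨i⟩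
  rw [← add_sum_erase _ f (mem_univ i)] at hS h
  rw [← add_sum_erase _ (f · ^ 2) (mem_univ i)] at h
  by_contra! hi
  nlinarith [sq_nonneg (f i)]

end CauchySchwarz

theorem const_add_mem_Gamma2 {n : ℕ} {c : ℝ} {v : Fin n → ℝ} (hc : 0 < c) (hv : ∑ i, v i = 0)
    (h : ∑ i, v i ^ 2 < n * (n - 1) * c ^ 2) : (fun i => c + v i) ∈ Gamma2 n := by
  have hn : (0 : ℝ) < n := by
    rcases n.eq_zero_or_pos with rfl | hn
    · simp at h
    · exact_mod_cast hn
  have hsum : ∑ i, (c + v i) = n * c := by simp [sum_add_distrib, hv]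
  have hsq : ∑ i, (c + v i) ^ 2 = n * c ^ 2 + ∑ i, v i ^ 2 := by
    simp only [add_sq, sum_add_distrib, ← mul_sum, hv]
    simp
  rw [mem_Gamma2_iff, hsum, hsq]
  exact ⟨by positivity, by linarith⟩

theorem one_mem_Gamma2 {n : ℕ} (hn : 2 ≤ n) : (fun _ => (1 : ℝ)) ∈ Gamma2 n := by
  have hn' : (2 : ℝ) ≤ n := by exact_mod_cast hn
  simpa using const_add_mem_Gamma2 (v := 0) one_pos (by simp) (by simp; nlinarith)

theorem sum_mul_nonneg_of_mem_Gamma2 {n : ℕ} {l μ : Fin n → ℝ} (hS : 0 ≤ ∑ i, l i)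
    (hl : (n - 1) * ∑ i, l i ^ 2 ≤ (∑ i, l i) ^ 2) (hμ : μ ∈ Gamma2 n) :
    0 ≤ ∑ i, l i * μ i := by
  obtain ⟨hT, hB⟩ := mem_Gamma2_iff.1 hμ
  have hCS := sq_card_mul_sum_mul_sub_le l μ
  have hvar := sq_sum_le_card_mul_sum_sq (s := univ) (f := μ)
  simp only [Fintype.card_fin, card_univ] at hCS hvar
  set S := ∑ i, l i
  set T := ∑ i, μ i
  set A := ∑ i, l i ^ 2
  set B := ∑ i, μ i ^ 2
  set P := ∑ i, l i * μ i
  have hn : 1 < (n : ℝ) := by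
    by_contra! hn
    nlinarith [mul_le_mul_of_nonneg_right hn (sum_nonneg fun i _ => sq_nonneg (μ i) : 0 ≤ B)]
  have hdev : (n * P - S * T) ^ 2 ≤ (S * T) ^ 2 := by
    refine le_of_mul_le_mul_left ?_ (sub_pos.2 hn)
    calc (n - 1) * (n * P - S * T) ^ 2
        ≤ (n - 1) * (n * A - S ^ 2) * (n * B - T ^ 2) := by
          rw [mul_assoc]; exact mul_le_mul_of_nonneg_left hCS (sub_nonneg.2 hn.le)
      _ ≤ S ^ 2 * (n * B - T ^ 2) := by
          refine mul_le_mul_of_nonneg_right ?_ (sub_nonneg.2 hvar)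
          nlinarith
      _ ≤ S ^ 2 * ((n - 1) * T ^ 2) := by gcongr; nlinarith
      _ = (n - 1) * (S * T) ^ 2 := by ring
  have := (abs_le_of_sq_le_sq' hdev (mul_nonneg hS hT.le)).1
  nlinarith

theorem exists_mem_Gamma2_sum_mul_neg {n : ℕ} {l : Fin n → ℝ}
    (h : (∑ i, l i) ^ 2 < (n - 1) * ∑ i, l i ^ 2) : ∃ μ ∈ Gamma2 n, ∑ i, l i * μ i < 0 := by
  set S := ∑ i, l i
  set A := ∑ i, l i ^ 2
  have hA : 0 ≤ A := sum_nonneg fun i _ => sq_nonneg (l i)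
  have hn : 1 < (n : ℝ) := by
    by_contra! hn
    nlinarith [mul_le_mul_of_nonneg_right hn hA, sq_nonneg S]
  set V := n * A - S ^ 2
  -- The test vector is `V + r (S - n l)`: `r < √((n - 1) V)` puts it in Γ₂⁺, `S < r` makes it
  -- pair negatively with `l`.
  have hV : 0 < V := by nlinarith
  obtain ⟨r, hSr, hr⟩ := exists_gt_sq_lt (p := S) (q := (n - 1) * V) (by nlinarith)
  have hv : ∑ i, r * (S - n * l i) = 0 := by
    simp only [← mul_sum, mul_sub, sum_sub_distrib, sum_const, card_univ, Fintype.card_fin,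
      nsmul_eq_mul, S]
    ring
  have hv2 : ∑ i, (r * (S - n * l i)) ^ 2 = r ^ 2 * (n * V) := by
    have (i : Fin n) : (r * (S - n * l i)) ^ 2
        = r ^ 2 * S ^ 2 - 2 * r ^ 2 * n * S * l i + r ^ 2 * n ^ 2 * l i ^ 2 := by ring
    simp only [this, sum_add_distrib, sum_sub_distrib, ← mul_sum, sum_const, card_univ,
      Fintype.card_fin, nsmul_eq_mul]
    ring
  refine ⟨_, const_add_mem_Gamma2 hV hv (by rw [hv2]; nlinarith), ?_⟩
  have : ∑ i, l i * (V + r * (S - n * l i)) = V * (S - r) := by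
    have (i : Fin n) : l i * (V + r * (S - n * l i)) = (V + r * S) * l i - r * n * l i ^ 2 := by
      ring
    simp only [this, sum_sub_distrib, ← mul_sum]
    ring
  rw [this]
  exact mul_neg_of_pos_of_neg hV (sub_neg.2 hSr)

/-- (Γ₂⁺)* = {λ ∈ closure(Γₙ⁺) : |λ|² ≤ σ₁(λ)²/(n−1)}. -/
theorem dual_cone_Gamma2 (n : ℕ) (hn : 2 ≤ n) :
    {l : Fin n → ℝ | ∀ μ ∈ Gamma2 n, 0 ≤ ∑ i, l i * μ i}
      = {l : Fin n → ℝ | (∀ i, 0 ≤ l i) ∧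
          ∑ i, (l i) ^ 2 ≤ (∑ i, l i) ^ 2 / (n - 1)} := by
  have hn1 : (0 : ℝ) < n - 1 := by
    have : (2 : ℝ) ≤ n := by exact_mod_cast hn
    linarith
  ext l
  rw [Set.mem_ofPred_eq, Set.mem_ofPred_eq, le_div_iff₀ hn1, mul_comm]
  constructor
  · intro hdual
    have hS : 0 ≤ ∑ i, l i := by simpa using hdual _ (one_mem_Gamma2 hn)
    have hA : (n - 1) * ∑ i, l i ^ 2 ≤ (∑ i, l i) ^ 2 := by
      by_contra! h
      obtain ⟨μ, hμ, hneg⟩ := exists_mem_Gamma2_sum_mul_neg h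
      exact (hdual μ hμ).not_gt hneg
    exact ⟨nonneg_of_card_sub_one_mul_sum_sq_le hS (by simpa using hA), hA⟩
  · rintro ⟨hl, hA⟩ μ hμ
    exact sum_mul_nonneg_of_mem_Gamma2 (sum_nonneg fun i _ => hl i) hA hμ
end

section
/- If A and B are real symmetric n×n matrices with eigenvalue vector of A in Γₖ⁺ and eigenvalue vector of B in the dual cone (Γₖ⁺)*, then Trace(AB) ≥ 0. -/
/-!
Diagonalising `A = U diag(λ) Uᵀ` and `B = V diag(μ) Vᵀ` gives `Trace(AB) = μ ⬝ (S λ)`, where `S` is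
the entrywise square of the orthogonal matrix `VᵀU`, hence doubly stochastic. By Birkhoff's theorem
`S` is a convex combination of permutation matrices, so it suffices that `μ ⬝ (λ ∘ σ) ≥ 0` for every
permutation `σ`; this holds because `Γₖ⁺` is invariant under permuting coordinates.
-/

open Finset

/-- The k-th elementary symmetric polynomial of l ∈ ℝⁿ. -/
noncomputable def esymm (n k : ℕ) (l : Fin n → ℝ) : ℝ :=
  ∑ s ∈ Finset.powersetCard k (Finset.univ : Finset (Fin n)), ∏ i ∈ s, l i

/-- The cone Γₖ⁺ = {λ : σⱼ(λ) > 0 for 1 ≤ j ≤ k}. -/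
noncomputable def Gamma (n k : ℕ) : Set (Fin n → ℝ) :=
  {l | ∀ j, 1 ≤ j → j ≤ k → 0 < esymm n j l}

open Matrix

lemma esymm_eq_multiset_esymm (n k : ℕ) (l : Fin n → ℝ) :
    esymm n k l = (univ.val.map l).esymm k :=
  (Finset.esymm_map_val l univ k).symm

lemma esymm_comp_perm (n k : ℕ) (l : Fin n → ℝ) (σ : Equiv.Perm (Fin n)) :
    esymm n k (l ∘ σ) = esymm n k l := by
  rw [esymm_eq_multiset_esymm, esymm_eq_multiset_esymm, ← Multiset.map_map,
    Multiset.map_univ_val_equiv]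

lemma comp_perm_mem_Gamma {n k : ℕ} {l : Fin n → ℝ} (hl : l ∈ Gamma n k)
    (σ : Equiv.Perm (Fin n)) : l ∘ σ ∈ Gamma n k := fun j hj1 hjk => by
  rw [esymm_comp_perm]
  exact hl j hj1 hjk

section DoublyStochastic

variable {ι R : Type*} [Fintype ι] [DecidableEq ι]

lemma hadamard_self_mem_doublyStochastic [CommRing R] [LinearOrder R] [IsStrictOrderedRing R]
    {W : Matrix ι ι R} (hW : W * Wᵀ = 1) : W ⊙ W ∈ doublyStochastic R ι := by
  have hW' : Wᵀ * W = 1 := mul_eq_one_comm.mp hW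
  refine mem_doublyStochastic_iff_sum.mpr
    ⟨fun i j => mul_self_nonneg (W i j), fun i => ?_, fun j => ?_⟩
  · simpa [mul_apply] using congrFun₂ hW i i
  · simpa [mul_apply] using congrFun₂ hW' j j

lemma dotProduct_mulVec_nonneg_of_mem_doublyStochastic [Field R] [LinearOrder R]
    [IsStrictOrderedRing R] {μ l : ι → R} (h : ∀ σ : Equiv.Perm ι, 0 ≤ μ ⬝ᵥ (l ∘ σ))
    {S : Matrix ι ι R} (hS : S ∈ doublyStochastic R ι) : 0 ≤ μ ⬝ᵥ (S *ᵥ l) := by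
  have hconvex : Convex R {M : Matrix ι ι R | 0 ≤ μ ⬝ᵥ (M *ᵥ l)} :=
    convex_halfSpace_ge ⟨fun M N => by simp [add_mulVec], fun c M => by simp [smul_mulVec]⟩ 0
  rw [← SetLike.mem_coe, doublyStochastic_eq_convexHull_permMatrix] at hS
  refine convexHull_min ?_ hconvex hS
  rintro _ ⟨σ, rfl⟩
  simpa [permMatrix_mulVec] using h σ

lemma Matrix.trace_diagonal_mul_mul_diagonal_mul_transpose [CommRing R] (a b : ι → R)
    (W : Matrix ι ι R) :
    (diagonal a * W * diagonal b * Wᵀ).trace = a ⬝ᵥ ((W ⊙ W) *ᵥ b) := by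
  rw [trace, dotProduct]
  simp only [diag_apply, mul_apply (M := diagonal a * W * diagonal b), mul_diagonal, diagonal_mul,
    transpose_apply, mulVec, dotProduct, hadamard_apply, mul_sum]
  exact sum_congr rfl fun i _ => sum_congr rfl fun j _ => by ring

lemma Matrix.IsHermitian.exists_trace_mul_eq_dotProduct_hadamard_mulVec {A B : Matrix ι ι ℝ}
    (hA : A.IsHermitian) (hB : B.IsHermitian) :
    ∃ W : Matrix ι ι ℝ, W * Wᵀ = 1 ∧
      (A * B).trace = hA.eigenvalues ⬝ᵥ ((W ⊙ W) *ᵥ hB.eigenvalues) := by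
  set U : Matrix ι ι ℝ := (hA.eigenvectorUnitary : Matrix ι ι ℝ)
  set V : Matrix ι ι ℝ := (hB.eigenvectorUnitary : Matrix ι ι ℝ)
  have hstar : ∀ M : Matrix ι ι ℝ, star M = Mᵀ := fun M => by
    rw [star_eq_conjTranspose, conjTranspose_eq_transpose_of_trivial]
  refine ⟨star U * V, ?_, ?_⟩
  · rw [← hstar]
    exact mem_unitaryGroup_iff.mp (star hA.eigenvectorUnitary * hB.eigenvectorUnitary).2
  · conv_lhs => rw [hA.spectral_theorem, hB.spectral_theorem]
    simp only [Unitary.conjStarAlgAut_apply, RCLike.ofReal_real_eq_id, Function.id_comp]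
    rw [← trace_diagonal_mul_mul_diagonal_mul_transpose, transpose_mul, ← hstar, ← hstar,
      star_star]
    simp only [Matrix.mul_assoc]
    rw [trace_mul_comm]
    simp only [Matrix.mul_assoc]
    rfl

end DoublyStochastic

theorem trace_nonneg_of_dual_general (n k : ℕ)
    (A B : Matrix (Fin n) (Fin n) ℝ) (hA : A.IsHermitian) (hB : B.IsHermitian)
    (hAmem : hA.eigenvalues ∈ Gamma n k)
    (hBdual : ∀ μ ∈ Gamma n k, 0 ≤ ∑ i, hB.eigenvalues i * μ i) :
    0 ≤ (A * B).trace := by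
  obtain ⟨W, hW, htrace⟩ := hB.exists_trace_mul_eq_dotProduct_hadamard_mulVec hA
  rw [trace_mul_comm, htrace]
  exact dotProduct_mulVec_nonneg_of_mem_doublyStochastic
    (fun σ => hBdual _ (comp_perm_mem_Gamma hAmem σ)) (hadamard_self_mem_doublyStochastic hW)

/-- if A, B are symmetric with λ(A) ∈ Γₖ⁺ and λ(B) ∈ (Γₖ⁺)*,
then Trace(AB) ≥ 0. -/
theorem trace_nonneg_of_dual (n k : ℕ) (hn : 1 ≤ n) (hk1 : 1 ≤ k) (hk2 : k ≤ n)
    (A B : Matrix (Fin n) (Fin n) ℝ) (hA : A.IsHermitian) (hB : B.IsHermitian)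
    (hAmem : hA.eigenvalues ∈ Gamma n k)
    (hBdual : ∀ μ ∈ Gamma n k, 0 ≤ ∑ i, hB.eigenvalues i * μ i) :
    0 ≤ (A * B).trace :=
  trace_nonneg_of_dual_general n k A B hA hB hAmem hBdual
end
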